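/- arXiv:2008.05025 — 5 statements merged into one kernel-verified Lean document; each statement's English description precedes it below -/
import Mathlib

section
/- Let G = (V,E) be a connected, locally finite simple graph in which every vertex x satisfies #N(x) ≥ 4, and let f : V → ℝ be coercive, i.e. for every a ∈ ℝ the sublevel set {x ∈ V : f(x) ≤ a} is finite. Suppose z₀ ≠ z₁ are two strict local minimum points of f, i.e. f(y) > f(zᵢ) for every y ∼ zᵢ (i = 0,1). Let c = inf over all paths P from z₀ to z₁ of max_{z ∈ P} f(z). Then c > max(f(z₀), f(z₁)), the infimum is attained by some path P from z₀ to z₁ (so max_{z ∈ P} f(z) = c), and there exists a vertex z on P with f(z) = c such that f(y) ≥ c for every neighbor y of z not lying on P; such a z is a mini-max point of f. -/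
/-!
A walk minimising `walkMax` exists because, by coercivity, only finitely many values of `f`
lie below the maximum of any fixed walk. At a vertex `z` where a minimising walk `p` attains
its maximum `c`, splice into `p` a back-and-forth excursion to each of the finitely many
neighbours `y` of `z` with `f y < c`: this does not raise the maximum, so the new walk is still
minimising, and every neighbour of `z` it misses has `f y ≥ c`. The value `c` exceeds `f z₀` and
`f z₁` because every walk between them leaves `z₀` and enters `z₁` through a neighbour.
-/

/-- The maximum of a function `f : V → ℝ` over the vertices of a walk `p`. -/
noncomputable def walkMax {V : Type*} [DecidableEq V] (G : SimpleGraph V) (f : V → ℝ)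
    {u v : V} (p : G.Walk u v) : ℝ :=
  p.support.toFinset.sup' ⟨u, by simp⟩ f

open SimpleGraph

namespace SimpleGraph

variable {V : Type*} [DecidableEq V] {G : SimpleGraph V} {f : V → ℝ} {u v z : V}

lemma le_walkMax (p : G.Walk u v) (hx : z ∈ p.support) : f z ≤ walkMax G f p :=
  Finset.le_sup' f (by simpa using hx)

lemma walkMax_le {c : ℝ} (p : G.Walk u v) (h : ∀ x ∈ p.support, f x ≤ c) :
    walkMax G f p ≤ c :=
  Finset.sup'_le _ _ fun x hx => h x (by simpa using hx)

lemma exists_mem_support_eq_walkMax (p : G.Walk u v) : ∃ z ∈ p.support, f z = walkMax G f p := by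
  obtain ⟨z, hz, hmax⟩ := Finset.exists_mem_eq_sup' (⟨u, by simp⟩ : p.support.toFinset.Nonempty) f
  exact ⟨z, by simpa using hz, hmax.symm⟩

lemma walkMax_reverse (p : G.Walk u v) : walkMax G f p.reverse = walkMax G f p := by
  simp [walkMax, Walk.support_reverse]

lemma apply_lt_walkMax_of_ne (huv : u ≠ v) (hmin : ∀ y, G.Adj u y → f u < f y)
    (p : G.Walk u v) : f u < walkMax G f p := by
  cases p with
  | nil => exact absurd rfl huv
  | cons hadj q => exact (hmin _ hadj).trans_le (le_walkMax _ (by simp))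

lemma exists_isLeast_walkMax (hreach : G.Reachable u v)
    (hcoer : ∀ a : ℝ, {x : V | f x ≤ a}.Finite) :
    ∃ p : G.Walk u v, IsLeast (Set.range fun q : G.Walk u v => walkMax G f q) (walkMax G f p) := by
  obtain ⟨p₀⟩ := hreach
  set S := Set.range fun q : G.Walk u v => walkMax G f q
  set a := walkMax G f p₀
  have hbelow : S ∩ Set.Iic a ⊆ f '' {x | f x ≤ a} := by
    rintro _ ⟨⟨p, rfl⟩, hpa⟩
    obtain ⟨z, -, hz⟩ := exists_mem_support_eq_walkMax (f := f) p
    exact ⟨z, by simpa [hz] using hpa, hz⟩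
  obtain ⟨m, ⟨⟨p, rfl⟩, -⟩, hmin⟩ :=
    Set.exists_min_image _ id (((hcoer a).image f).subset hbelow) ⟨a, ⟨p₀, rfl⟩, Set.mem_Iic.2 le_rfl⟩
  refine ⟨p, ⟨p, rfl⟩, fun x hx => ?_⟩
  rcases le_or_gt x a with hxa | hax
  · exact hmin x ⟨hx, hxa⟩
  · exact (hmin a ⟨⟨p₀, rfl⟩, Set.mem_Iic.2 le_rfl⟩).trans hax.le

lemma exists_walk_support_insert (p : G.Walk u v) (hz : z ∈ p.support) {y : V}
    (hzy : G.Adj z y) : ∃ q : G.Walk u v, ∀ x, x ∈ q.support ↔ x = y ∨ x ∈ p.support := by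
  refine ⟨(p.takeUntil z hz).append (.cons hzy (.cons hzy.symm (p.dropUntil z hz))), fun x => ?_⟩
  conv_rhs => rw [← p.take_spec hz]
  simp only [Walk.mem_support_append_iff, Walk.support_cons, List.mem_cons]
  have := (p.takeUntil z hz).end_mem_support
  constructor
  · rintro (h | rfl | rfl | h) <;> simp_all
  · rintro (rfl | h | h) <;> simp_all

lemma exists_walk_support_union (p : G.Walk u v) (hz : z ∈ p.support) {s : Set V}
    (hs : s.Finite) (hadj : ∀ y ∈ s, G.Adj z y) :
    ∃ q : G.Walk u v, ∀ x, x ∈ q.support ↔ x ∈ p.support ∨ x ∈ s := by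
  induction s, hs using Set.Finite.induction_on with
  | empty => exact ⟨p, by simp⟩
  | @insert y s _ _ ih =>
    obtain ⟨q, hq⟩ := ih fun x hx => hadj x (Set.mem_insert_of_mem y hx)
    obtain ⟨q', hq'⟩ :=
      exists_walk_support_insert q ((hq z).2 (Or.inl hz)) (hadj y (Set.mem_insert y s))
    exact ⟨q', fun x => by rw [hq', hq, Set.mem_insert_iff]; tauto⟩

lemma exists_walk_minimax_point {p : G.Walk u v}
    (hp : IsLeast (Set.range fun q : G.Walk u v => walkMax G f q) (walkMax G f p))
    (hfin : {x | f x < walkMax G f p}.Finite) :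
    ∃ q : G.Walk u v, walkMax G f q = walkMax G f p ∧
      ∃ z ∈ q.support, f z = walkMax G f q ∧
        ∀ y : V, G.Adj z y → y ∉ q.support → walkMax G f q ≤ f y := by
  obtain ⟨z, hz, hzmax⟩ := exists_mem_support_eq_walkMax (f := f) p
  obtain ⟨q, hq⟩ := exists_walk_support_union p hz
    (hfin.subset fun y (hy : G.Adj z y ∧ _) => hy.2) fun y hy => hy.1
  have hqmax : walkMax G f q = walkMax G f p := by
    refine le_antisymm (walkMax_le q fun x hx => ?_) (hp.2 ⟨q, rfl⟩)
    rcases (hq x).1 hx with hxp | hxs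
    · exact le_walkMax p hxp
    · exact hxs.2.le
  refine ⟨q, hqmax, z, (hq z).2 (Or.inl hz), hqmax ▸ hzmax, fun y hzy hyq => ?_⟩
  rw [hqmax]
  by_contra! hlt
  exact hyq ((hq y).2 (Or.inr ⟨hzy, hlt⟩))

end SimpleGraph

/-- **Mini-max theorem on graphs.** Let `G` be a connected, locally finite simple graph
with `#N(x) ≥ 4` at every vertex, and let `f : V → ℝ` be coercive (all sublevel sets are
finite). If `z₀ ≠ z₁` are two strict local minimum points of `f`, then the mini-max
value `c = inf_{paths P from z₀ to z₁} max_{z ∈ P} f z` satisfies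
`c > max (f z₀) (f z₁)`, the infimum is attained by some path `P`, and some vertex `z`
on `P` with `f z = c` satisfies `f y ≥ c` for every neighbor `y` of `z` not on `P`
(a mini-max point of `f`). -/
theorem minimax_point_exists {V : Type*} [DecidableEq V] (G : SimpleGraph V)
    [DecidableRel G.Adj] [∀ v : V, Fintype (G.neighborSet v)]
    (hconn : G.Connected) (hdeg : ∀ x : V, 4 ≤ G.degree x)
    (f : V → ℝ) (hcoer : ∀ a : ℝ, {x : V | f x ≤ a}.Finite)
    (z₀ z₁ : V) (hne : z₀ ≠ z₁)
    (h₀ : ∀ y : V, G.Adj z₀ y → f z₀ < f y)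
    (h₁ : ∀ y : V, G.Adj z₁ y → f z₁ < f y) :
    max (f z₀) (f z₁) < sInf {m : ℝ | ∃ p : G.Walk z₀ z₁, walkMax G f p = m} ∧
    ∃ p : G.Walk z₀ z₁,
      walkMax G f p = sInf {m : ℝ | ∃ q : G.Walk z₀ z₁, walkMax G f q = m} ∧
      ∃ z ∈ p.support, f z = walkMax G f p ∧
        ∀ y : V, G.Adj z y → y ∉ p.support → walkMax G f p ≤ f y := by
  obtain ⟨p, hp⟩ := exists_isLeast_walkMax (hconn.preconnected z₀ z₁) hcoer
  have hc : sInf {m : ℝ | ∃ q : G.Walk z₀ z₁, walkMax G f q = m} = walkMax G f p := hp.csInf_eq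
  rw [hc]
  refine ⟨max_lt (apply_lt_walkMax_of_ne hne h₀ p) ?_,
    exists_walk_minimax_point hp ((hcoer _).subset fun _ (hx : f _ < _) => hx.le)⟩
  rw [← walkMax_reverse]
  exact apply_lt_walkMax_of_ne hne.symm h₁ p.reverse
end

section
/- (Barta-type theorem) Let G = (V,E) be a connected, locally finite simple graph in which every vertex has degree at least 1, let Q : V → ℝ, and let L be the Schrödinger operator Lf(x) = −Δf(x) + Q(x) f(x). Suppose there exist μ ∈ ℝ and a function u : V → ℝ with u(x) > 0 for all x such that Lu(x) ≥ μ u(x) for every x ∈ V. Then for every finite subset S ⊆ V and every function f : V → ℝ vanishing outside S with f not identically zero, Σ_{x ∈ S} (Lf)(x) f(x) d_x ≥ μ Σ_{x ∈ S} f(x)² d_x; equivalently, the principal Dirichlet eigenvalue μ₁(S) = inf{ Σ_{x∈S} (Lf)(x) f(x) d_x : f vanishes outside S, Σ_{x∈S} f(x)² d_x = 1 } satisfies μ₁(S) ≥ μ for every finite S, so μ₁(Q) = inf_S μ₁(S) ≥ μ. -/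
/-! Ground-state transform (a discrete Picone identity): for `u > 0`,
`d_x (Lf)(x) f(x) = d_x (Lu)(x) f(x)² / u(x) + Σ_{y ∼ x} (f(x)² u(y) / u(x) − f(x) f(y))`.
Summed over `S`, the edge terms are nonnegative: an edge inside `S` contributes, together with its
reverse, `(f(x) u(y) − f(y) u(x))² / (u(x) u(y))`, and an edge leaving `S` contributes
`f(x)² u(y) / u(x)` because `f` vanishes outside `S`. The hypothesis `Lu ≥ μ u` bounds the first
term below by `μ f(x)² d_x`. -/

/-- The graph Laplacian `Δf(x) = (1/d_x) Σ_{y ∼ x} (f y − f x)`. -/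
noncomputable def graphLap {V : Type*} (G : SimpleGraph V) [DecidableRel G.Adj]
    [∀ v : V, Fintype (G.neighborSet v)] (f : V → ℝ) (x : V) : ℝ :=
  (1 / (G.degree x : ℝ)) * ∑ y ∈ G.neighborFinset x, (f y - f x)

/-- The Schrödinger operator `L = −Δ + Q`, acting by `Lf(x) = −Δf(x) + Q(x) f(x)`. -/
noncomputable def schrodingerOp {V : Type*} (G : SimpleGraph V) [DecidableRel G.Adj]
    [∀ v : V, Fintype (G.neighborSet v)] (Q : V → ℝ) (f : V → ℝ) (x : V) : ℝ :=
  -graphLap G f x + Q x * f x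

open Finset

noncomputable def piconeTerm {V : Type*} (f u : V → ℝ) (x y : V) : ℝ :=
  f x ^ 2 * u y / u x - f x * f y

theorem piconeTerm_add_swap_nonneg {V : Type*} {f u : V → ℝ} {x y : V}
    (hx : 0 < u x) (hy : 0 < u y) : 0 ≤ piconeTerm f u x y + piconeTerm f u y x := by
  have : piconeTerm f u x y + piconeTerm f u y x = (f x * u y - f y * u x) ^ 2 / (u x * u y) := by
    unfold piconeTerm
    field_simp
    ring
  rw [this]
  positivity

theorem piconeTerm_nonneg_of_eq_zero {V : Type*} {f u : V → ℝ} {x y : V}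
    (hx : 0 < u x) (hy : 0 < u y) (hfy : f y = 0) : 0 ≤ piconeTerm f u x y := by
  simp only [piconeTerm, hfy, mul_zero, sub_zero]
  positivity

namespace SimpleGraph

variable {V : Type*} (G : SimpleGraph V) [DecidableRel G.Adj]

theorem sum_sum_adj_nonneg_of_add_swap_nonneg (S : Finset V) {F : V → V → ℝ}
    (hF : ∀ x y, G.Adj x y → 0 ≤ F x y + F y x) :
    0 ≤ ∑ x ∈ S, ∑ y ∈ S with G.Adj x y, F x y := by
  have hswap : ∑ x ∈ S, ∑ y ∈ S with G.Adj x y, F x y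
      = ∑ x ∈ S, ∑ y ∈ S with G.Adj x y, F y x := by
    simp only [sum_filter]
    rw [sum_comm]
    simp only [G.adj_comm]
  have hsum : 0 ≤ ∑ x ∈ S, ∑ y ∈ S with G.Adj x y, (F x y + F y x) :=
    sum_nonneg fun x _ => sum_nonneg fun y hy => hF x y (mem_filter.mp hy).2
  simp only [sum_add_distrib, ← hswap] at hsum
  linarith

variable [∀ v : V, Fintype (G.neighborSet v)]

/- Valid also for isolated vertices: there `1 / 0 = 0` and the neighbour sum is empty. -/
theorem degree_mul_graphLap (f : V → ℝ) (x : V) :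
    (G.degree x : ℝ) * graphLap G f x = ∑ y ∈ G.neighborFinset x, (f y - f x) := by
  rcases Nat.eq_zero_or_pos (G.degree x) with h | h
  · have hN : G.neighborFinset x = ∅ := by rwa [← card_eq_zero, card_neighborFinset_eq_degree]
    simp [h, hN]
  · rw [graphLap, ← mul_assoc, mul_one_div_cancel (by positivity), one_mul]

theorem schrodingerOp_mul_self_mul_degree (Q f u : V → ℝ) {x : V} (hux : u x ≠ 0) :
    schrodingerOp G Q f x * f x * G.degree x
      = schrodingerOp G Q u x * (f x ^ 2 / u x) * G.degree x
        + ∑ y ∈ G.neighborFinset x, piconeTerm f u x y := by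
  have hf := G.degree_mul_graphLap f x
  have hu := G.degree_mul_graphLap u x
  have hsum : ∑ y ∈ G.neighborFinset x, piconeTerm f u x y
      = f x ^ 2 / u x * ∑ y ∈ G.neighborFinset x, (u y - u x)
        - f x * ∑ y ∈ G.neighborFinset x, (f y - f x) := by
    rw [mul_sum, mul_sum, ← sum_sub_distrib]
    refine sum_congr rfl fun y _ => ?_
    rw [piconeTerm]
    field_simp
    ring
  rw [hsum, ← hf, ← hu, schrodingerOp, schrodingerOp]
  field_simp
  ring

theorem sum_sum_piconeTerm_nonneg (S : Finset V) {f u : V → ℝ} (hf : ∀ x ∉ S, f x = 0)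
    (hu : ∀ x, 0 < u x) :
    0 ≤ ∑ x ∈ S, ∑ y ∈ G.neighborFinset x, piconeTerm f u x y := by
  classical
  have hinside : ∀ x, {y ∈ G.neighborFinset x | y ∈ S} = {y ∈ S | G.Adj x y} := fun x => by
    ext y
    simp [and_comm]
  simp only [← sum_filter_add_sum_filter_not (G.neighborFinset _) (· ∈ S), sum_add_distrib,
    hinside]
  refine add_nonneg (G.sum_sum_adj_nonneg_of_add_swap_nonneg S fun x y _ =>
    piconeTerm_add_swap_nonneg (hu x) (hu y)) (sum_nonneg fun x _ => sum_nonneg fun y hy => ?_)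
  exact piconeTerm_nonneg_of_eq_zero (hu x) (hu y) (hf y (mem_filter.mp hy).2)

end SimpleGraph

/-- **Barta-type theorem.** Let `G` be a connected, locally finite simple graph with all
degrees at least `1`, `Q : V → ℝ`, and `L = −Δ + Q`. If there are `μ ∈ ℝ` and a
positive function `u` with `Lu ≥ μ u` on `V`, then for every finite `S ⊆ V` and every
`f : V → ℝ` vanishing outside `S` and not identically zero,
`Σ_{x∈S} (Lf)(x) f(x) d_x ≥ μ Σ_{x∈S} f(x)² d_x`; in particular every principal
Dirichlet eigenvalue `μ₁(S)`, and hence `μ₁(Q) = inf_S μ₁(S)`, is at least `μ`. -/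
theorem barta_type_theorem {V : Type*} (G : SimpleGraph V)
    [DecidableRel G.Adj] [∀ v : V, Fintype (G.neighborSet v)]
    (hconn : G.Connected) (hdeg : ∀ x : V, 1 ≤ G.degree x)
    (Q : V → ℝ) (μ : ℝ) (u : V → ℝ) (hu : ∀ x : V, 0 < u x)
    (hL : ∀ x : V, μ * u x ≤ schrodingerOp G Q u x) :
    ∀ (S : Finset V) (f : V → ℝ), (∀ x ∉ S, f x = 0) → f ≠ 0 →
      μ * ∑ x ∈ S, f x ^ 2 * (G.degree x : ℝ) ≤
        ∑ x ∈ S, schrodingerOp G Q f x * f x * (G.degree x : ℝ) := by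
  intro S f hf _
  have hpointwise (x : V) :
      μ * (f x ^ 2 * G.degree x) ≤ schrodingerOp G Q u x * (f x ^ 2 / u x) * G.degree x := by
    have hweight : 0 ≤ f x ^ 2 / u x * G.degree x := by have := hu x; positivity
    calc μ * (f x ^ 2 * G.degree x) = μ * u x * (f x ^ 2 / u x * G.degree x) := by
          field_simp [(hu x).ne']
      _ ≤ schrodingerOp G Q u x * (f x ^ 2 / u x * G.degree x) :=
          mul_le_mul_of_nonneg_right (hL x) hweight
      _ = _ := by ring
  calc μ * ∑ x ∈ S, f x ^ 2 * (G.degree x : ℝ)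
      ≤ ∑ x ∈ S, schrodingerOp G Q u x * (f x ^ 2 / u x) * G.degree x := by
        rw [mul_sum]
        exact sum_le_sum fun x _ => hpointwise x
    _ ≤ ∑ x ∈ S, schrodingerOp G Q u x * (f x ^ 2 / u x) * G.degree x
          + ∑ x ∈ S, ∑ y ∈ G.neighborFinset x, piconeTerm f u x y :=
        le_add_of_nonneg_right (G.sum_sum_piconeTerm_nonneg S hf hu)
    _ = ∑ x ∈ S, schrodingerOp G Q f x * f x * G.degree x := by
        rw [← sum_add_distrib]
        exact sum_congr rfl fun x _ =>
          (G.schrodingerOp_mul_self_mul_degree Q f u (hu x).ne').symm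
end

section
/- (Energy identity for the heat flow) Let G = (V,E) be a locally finite simple graph, S ⊆ V finite with every vertex of S̄ = S ∪ δS of degree at least 1, Q : S̄ → ℝ, f : S̄ → ℝ vanishing on δS, and let u : [0,∞) × S̄ → ℝ be the solution of ∂_t u = Δu − Q u on S with u(t,·) = 0 on δS and u(0,·) = f. Define the energy F(v) = Σ_{x ∈ S} ( −Δv(x) + Q(x) v(x) ) v(x) d_x for v : S̄ → ℝ vanishing on δS. Then for every t ≥ 0, F(u(t,·)) + 2 ∫₀ᵗ Σ_{x ∈ S} (∂_t u(s,x))² d_x ds = F(f); in particular t ↦ F(u(t,·)) is nonincreasing. -/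
/-- The boundary `δS` of a finite vertex set `S`. -/
def graphBd {V : Type*} [DecidableEq V] (G : SimpleGraph V) [DecidableRel G.Adj]
    [∀ v : V, Fintype (G.neighborSet v)] (S : Finset V) : Finset V :=
  (S.biUnion fun x => G.neighborFinset x) \ S

/-- The closure `S̄ = S ∪ δS` of a finite vertex set `S`. -/
def graphCl {V : Type*} [DecidableEq V] (G : SimpleGraph V) [DecidableRel G.Adj]
    [∀ v : V, Fintype (G.neighborSet v)] (S : Finset V) : Finset V :=
  S ∪ graphBd G S

/-- The energy `F(v) = Σ_{x∈S} (−Δv(x) + Q(x) v(x)) v(x) d_x`. -/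
noncomputable def graphEnergy {V : Type*} (G : SimpleGraph V) [DecidableRel G.Adj]
    [∀ v : V, Fintype (G.neighborSet v)] (S : Finset V) (Q : V → ℝ) (v : V → ℝ) : ℝ :=
  ∑ x ∈ S, (-graphLap G v x + Q x * v x) * v x * (G.degree x : ℝ)

/-! The energy is the quadratic form of `-Δ + Q` with respect to the weights `d_x`, and this
operator is symmetric on functions vanishing on `δS` (summation by parts). Hence
`d/dt F(u) = 2 ⟨(-Δ + Q) u, ∂ₜu⟩ = -2 Σ (∂ₜu)² d_x`: the identity is the fundamental theorem of
calculus, and the energy is nonincreasing because its derivative is nonpositive. -/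

open Finset

section GraphForm

variable {V : Type*} (G : SimpleGraph V) [DecidableRel G.Adj]

lemma sum_sum_adj_comm (S : Finset V) (a b : V → ℝ) :
    ∑ x ∈ S, ∑ y ∈ S, (if G.Adj x y then a y * b x else 0) =
      ∑ x ∈ S, ∑ y ∈ S, (if G.Adj x y then b y * a x else 0) := by
  rw [sum_comm]
  simp only [G.adj_comm, mul_comm]

variable [∀ v : V, Fintype (G.neighborSet v)]

lemma graphLap_mul_degree (v : V → ℝ) (x : V) :
    graphLap G v x * G.degree x = ∑ y ∈ G.neighborFinset x, v y - G.degree x * v x := by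
  rw [graphLap, ← G.card_neighborFinset_eq_degree]
  rcases (G.neighborFinset x).eq_empty_or_nonempty with h | h
  · simp [h]
  · rw [sum_sub_distrib, sum_const, nsmul_eq_mul]
    field_simp [h.card_pos.ne']

noncomputable def graphPairing (S : Finset V) (Q v w : V → ℝ) : ℝ :=
  ∑ x ∈ S, (-graphLap G v x + Q x * v x) * w x * (G.degree x : ℝ)

lemma graphPairing_self (S : Finset V) (Q v : V → ℝ) :
    graphPairing G S Q v v = graphEnergy G S Q v := rfl

variable [DecidableEq V] {G}

lemma mem_graphBd_of_adj {S : Finset V} {x y : V} (hx : x ∈ S) (hxy : G.Adj x y) (hy : y ∉ S) :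
    y ∈ graphBd G S :=
  mem_sdiff.2 ⟨mem_biUnion.2 ⟨x, hx, (G.mem_neighborFinset x y).2 hxy⟩, hy⟩

lemma mem_graphCl_of_adj {S : Finset V} {x y : V} (hx : x ∈ S) (hxy : G.Adj x y) :
    y ∈ graphCl G S := by
  by_cases hy : y ∈ S
  · exact mem_union_left _ hy
  · exact mem_union_right _ (mem_graphBd_of_adj hx hxy hy)

lemma sum_neighborFinset_eq_sum_adj {S : Finset V} {v : V → ℝ}
    (hv : ∀ y ∈ graphBd G S, v y = 0) {x : V} (hx : x ∈ S) :
    ∑ y ∈ G.neighborFinset x, v y = ∑ y ∈ S, if G.Adj x y then v y else 0 := by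
  rw [← sum_filter]
  refine (sum_subset (fun y hy => ?_) fun y hy hyS => hv y ?_).symm
  · simpa using (mem_filter.1 hy).2
  · have hxy : G.Adj x y := (G.mem_neighborFinset x y).1 hy
    exact mem_graphBd_of_adj hx hxy fun hyS' => hyS (mem_filter.2 ⟨hyS', hxy⟩)

lemma graphPairing_eq {S : Finset V} (Q : V → ℝ) {v : V → ℝ}
    (hv : ∀ y ∈ graphBd G S, v y = 0) (w : V → ℝ) :
    graphPairing G S Q v w = ∑ x ∈ S, (1 + Q x) * G.degree x * v x * w x -
      ∑ x ∈ S, ∑ y ∈ S, (if G.Adj x y then v y * w x else 0) := by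
  rw [graphPairing, ← sum_sub_distrib]
  refine sum_congr rfl fun x hx => ?_
  have hlap := graphLap_mul_degree G v x
  rw [sum_neighborFinset_eq_sum_adj hv hx] at hlap
  simp only [← ite_zero_mul, ← sum_mul]
  linear_combination (-(w x)) * hlap

lemma hasDerivWithinAt_graphEnergy {S : Finset V} (Q : V → ℝ) {v : ℝ → V → ℝ} {w : V → ℝ}
    {s : Set ℝ} {t : ℝ} (ht : t ∈ s) (hv : ∀ r ∈ s, ∀ y ∈ graphBd G S, v r y = 0)
    (hderiv : ∀ x ∈ S, HasDerivWithinAt (fun r => v r x) (w x) s t) :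
    HasDerivWithinAt (fun r => graphEnergy G S Q (v r)) (2 * graphPairing G S Q (v t) w) s t := by
  have hadj : ∀ x ∈ S, ∀ y ∈ S, HasDerivWithinAt
      (fun r => if G.Adj x y then v r y * v r x else 0)
      ((if G.Adj x y then w y * v t x else 0) + if G.Adj x y then v t y * w x else 0) s t := by
    intro x hx y hy
    by_cases h : G.Adj x y
    · simpa only [h, if_true] using (hderiv y hy).fun_mul (hderiv x hx)
    · simpa only [h, if_false, add_zero] using hasDerivWithinAt_const t s (0 : ℝ)
  have hpoly := (HasDerivWithinAt.fun_sum fun x hx =>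
      (((hderiv x hx).const_mul ((1 + Q x) * G.degree x)).fun_mul (hderiv x hx))).fun_sub
    (HasDerivWithinAt.fun_sum fun x hx => HasDerivWithinAt.fun_sum fun y hy => hadj x hx y hy)
  refine (hpoly.congr (fun r hr => by rw [← graphPairing_self, graphPairing_eq Q (hv r hr)])
    (by rw [← graphPairing_self, graphPairing_eq Q (hv t ht)])).congr_deriv ?_
  simp only [sum_add_distrib, sum_sum_adj_comm G S w (v t), graphPairing_eq Q (hv t ht)]
  have hsymm : ∑ x ∈ S, (1 + Q x) * G.degree x * w x * v t x =
      ∑ x ∈ S, (1 + Q x) * G.degree x * v t x * w x := sum_congr rfl fun x _ => by ring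
  rw [hsymm]
  ring

lemma graphEnergy_congr {S : Finset V} (Q : V → ℝ) {v w : V → ℝ}
    (h : ∀ y ∈ graphCl G S, v y = w y) : graphEnergy G S Q v = graphEnergy G S Q w := by
  refine sum_congr rfl fun x hx => ?_
  have hlap : graphLap G v x = graphLap G w x := by
    refine congrArg _ (sum_congr rfl fun y hy => ?_)
    rw [h y (mem_graphCl_of_adj hx ((G.mem_neighborFinset x y).1 hy)), h x (mem_union_left _ hx)]
  rw [hlap, h x (mem_union_left _ hx)]

end GraphForm

theorem intervalIntegral.integral_eq_sub_of_hasDerivWithinAt_Ici_of_nonneg {g g' : ℝ → ℝ}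
    {a b : ℝ} (hab : a ≤ b) (hderiv : ∀ t ∈ Set.Ici a, HasDerivWithinAt g (g' t) (Set.Ici a) t)
    (hpos : ∀ t ∈ Set.Ioo a b, 0 ≤ g' t) : ∫ t in a..b, g' t = g b - g a := by
  have hcont : ContinuousOn g (Set.Icc a b) := fun t ht =>
    (hderiv t ht.1).continuousWithinAt.mono Set.Icc_subset_Ici_self
  have hright : ∀ t ∈ Set.Ioo a b, HasDerivWithinAt g (g' t) (Set.Ioi t) t := fun t ht =>
    (hderiv t ht.1.le).mono (Set.Ioi_subset_Ici ht.1.le)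
  exact integral_eq_sub_of_hasDeriv_right_of_le hab hcont hright
    ((intervalIntegrable_iff_integrableOn_Ioc_of_le hab).2
      (integrableOn_deriv_right_of_nonneg hcont hright hpos))

/-- **Energy identity for the heat flow.** If `u` solves `∂_t u = Δu − Q u` on a finite
subgraph `S` with Dirichlet boundary condition `u = 0` on `δS` and initial value
`u(0,·) = f` (with `f = 0` on `δS`), then for every `t ≥ 0`:
`F(u(t,·)) + 2 ∫₀ᵗ Σ_{x∈S} (∂_t u(s,x))² d_x ds = F(f)`, where
`F(v) = Σ_{x∈S} (−Δv + Q v) v d_x`; in particular `t ↦ F(u(t,·))` is nonincreasing. -/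
theorem heat_flow_energy_identity {V : Type*} [DecidableEq V] (G : SimpleGraph V)
    [DecidableRel G.Adj] [∀ v : V, Fintype (G.neighborSet v)]
    (S : Finset V) (hdeg : ∀ x ∈ graphCl G S, 1 ≤ G.degree x)
    (Q f : V → ℝ) (hf : ∀ y ∈ graphBd G S, f y = 0)
    (u u' : ℝ → V → ℝ)
    (hbd : ∀ t ∈ Set.Ici (0 : ℝ), ∀ y ∈ graphBd G S, u t y = 0)
    (hinit : ∀ x ∈ graphCl G S, u 0 x = f x)
    (hderiv : ∀ x ∈ S, ∀ t ∈ Set.Ici (0 : ℝ),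
      HasDerivWithinAt (fun s => u s x) (u' t x) (Set.Ici 0) t)
    (hflow : ∀ x ∈ S, ∀ t ∈ Set.Ici (0 : ℝ),
      u' t x = graphLap G (u t) x - Q x * u t x) :
    (∀ t ∈ Set.Ici (0 : ℝ),
      graphEnergy G S Q (u t) +
        2 * ∫ s in (0 : ℝ)..t, ∑ x ∈ S, u' s x ^ 2 * (G.degree x : ℝ) =
      graphEnergy G S Q f) ∧
    (∀ s ∈ Set.Ici (0 : ℝ), ∀ t : ℝ, s ≤ t →
      graphEnergy G S Q (u t) ≤ graphEnergy G S Q (u s)) := by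
  set φ : ℝ → ℝ := fun s => ∑ x ∈ S, u' s x ^ 2 * (G.degree x : ℝ)
  have hφ : ∀ s, 0 ≤ φ s := fun s => sum_nonneg fun x _ => by positivity
  have hpairing : ∀ t ∈ Set.Ici (0 : ℝ), graphPairing G S Q (u t) (u' t) = -φ t := by
    intro t ht
    rw [graphPairing, ← sum_neg_distrib]
    exact sum_congr rfl fun x hx => by rw [hflow x hx t ht]; ring
  have hE : ∀ t ∈ Set.Ici (0 : ℝ),
      HasDerivWithinAt (fun r => graphEnergy G S Q (u r)) (-(2 * φ t)) (Set.Ici 0) t :=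
    fun t ht => (hasDerivWithinAt_graphEnergy Q ht hbd fun x hx => hderiv x hx t ht).congr_deriv
      (by rw [hpairing t ht]; ring)
  refine ⟨fun t ht => ?_, fun s hs t hst => ?_⟩
  · have hftc := intervalIntegral.integral_eq_sub_of_hasDerivWithinAt_Ici_of_nonneg ht
      (g := fun r => -graphEnergy G S Q (u r)) (fun r hr => by simpa using (hE r hr).fun_neg)
      (fun r _ => mul_nonneg zero_le_two (hφ r))
    rw [intervalIntegral.integral_const_mul] at hftc
    rw [← graphEnergy_congr Q hinit]
    linarith
  · have hanti : AntitoneOn (fun r => graphEnergy G S Q (u r)) (Set.Ici 0) := by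
      refine antitoneOn_of_hasDerivWithinAt_nonpos (f' := fun r => -(2 * φ r)) (convex_Ici 0)
        (fun r hr => (hE r hr).continuousWithinAt) (fun r hr => ?_) (fun r _ => ?_)
      · rw [interior_Ici] at hr ⊢
        exact (hE r (Set.mem_Ici_of_Ioi hr)).mono Set.Ioi_subset_Ici_self
      · linarith [hφ r]
    exact hanti hs (Set.mem_Ici.2 (le_trans hs hst)) hst
end

section
/- (Energy estimate for the discrete Morse flow) Let G = (V,E) be a locally finite simple graph, S ⊆ V finite with every vertex of S̄ = S ∪ δS of degree at least 1, h > 0, and let λ₁ ≤ λ₂ ≤ ⋯ ≤ λ_N be real numbers. For u : S̄ → ℝ vanishing on δS set D(u) = (1/2) Σ_{x ∈ S̄} Σ_{y ∈ S̄, y ∼ x} (u(y) − u(x))² and J_n(u) = (1/2) D(u) − (λ_n/2) Σ_{x ∈ S} u(x)² d_x. Let u₀ : S̄ → ℝ vanish on δS, and for n = 1, …, N let u_n minimize F_n(u) = (1/(2h)) Σ_{x ∈ S} (u(x) − u_{n−1}(x))² d_x + J_n(u) over functions on S̄ vanishing on δS. Then (1/2) Σ_{n=1}^{N} h Σ_{x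 ∈ S} ((u_n(x) − u_{n−1}(x))/h)² d_x + J_N(u_N) ≤ J₁(u₀). -/
/-- The Dirichlet energy `D(u) = (1/2) Σ_{x ∈ S̄} Σ_{y ∈ S̄, y ∼ x} (u y − u x)²`. -/
noncomputable def graphDirichlet {V : Type*} [DecidableEq V] (G : SimpleGraph V)
    [DecidableRel G.Adj] [∀ v : V, Fintype (G.neighborSet v)]
    (S : Finset V) (u : V → ℝ) : ℝ :=
  (1 / 2 : ℝ) * ∑ x ∈ graphCl G S, ∑ y ∈ G.neighborFinset x ∩ graphCl G S, (u y - u x) ^ 2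

/-- The functional `J_n(u) = (1/2) D(u) − (λ_n/2) Σ_{x∈S} u(x)² d_x`. -/
noncomputable def morseJ {V : Type*} [DecidableEq V] (G : SimpleGraph V)
    [DecidableRel G.Adj] [∀ v : V, Fintype (G.neighborSet v)]
    (S : Finset V) (lam : ℕ → ℝ) (n : ℕ) (u : V → ℝ) : ℝ :=
  (1 / 2 : ℝ) * graphDirichlet G S u - (lam n / 2) * ∑ x ∈ S, u x ^ 2 * (G.degree x : ℝ)

/-!
Testing the minimality of `u_n` against the previous step `u_{n-1}` gives the one-step
dissipation `(1/(2h)) Σ_S (u_n − u_{n−1})² d + J_n(u_n) ≤ J_n(u_{n−1})`, and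
`J_n ≤ J_{n−1}` pointwise because `λ` is nondecreasing; chaining these from `n = N` down to `n = 1`
telescopes to the estimate.
-/

open Finset

/-- `E n m` stands for the `n`-th energy of the `m`-th iterate. -/
theorem sum_Icc_add_energy_le {a : ℕ → ℝ} {E : ℕ → ℕ → ℝ} {N : ℕ} (hN : 1 ≤ N)
    (hstep : ∀ n, 1 ≤ n → n ≤ N → a n + E n n ≤ E n (n - 1))
    (hmono : ∀ n, 1 ≤ n → n < N → E (n + 1) n ≤ E n n) :
    ∑ n ∈ Icc 1 N, a n + E N N ≤ E 1 0 := by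
  induction N, hN using Nat.le_induction with
  | base => simpa using hstep 1 le_rfl le_rfl
  | succ m hm ih =>
    have hprev := ih (fun n h1 h2 => hstep n h1 (by omega)) (fun n h1 h2 => hmono n h1 (by omega))
    have hlast := hstep (m + 1) (by omega) le_rfl
    have hdrop := hmono m hm (by omega)
    rw [sum_Icc_succ_top (by omega)]
    simp only [Nat.add_sub_cancel] at hlast
    linarith

theorem half_mul_mul_sum_div_sq {ι : Type*} (s : Finset ι) (a d : ι → ℝ) (h : ℝ) :
    1 / 2 * (h * ∑ i ∈ s, (a i / h) ^ 2 * d i) = 1 / (2 * h) * ∑ i ∈ s, a i ^ 2 * d i := by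
  rcases eq_or_ne h 0 with rfl | hh
  · simp
  · simp only [mul_sum]
    refine sum_congr rfl fun i _ => ?_
    field_simp

theorem morseJ_le_morseJ_of_le {V : Type*} [DecidableEq V] (G : SimpleGraph V)
    [DecidableRel G.Adj] [∀ v : V, Fintype (G.neighborSet v)] (S : Finset V)
    {lam : ℕ → ℝ} {m n : ℕ} (hlam : lam n ≤ lam m) (v : V → ℝ) :
    morseJ G S lam m v ≤ morseJ G S lam n v := by
  have hmass : 0 ≤ ∑ x ∈ S, v x ^ 2 * (G.degree x : ℝ) :=
    sum_nonneg fun x _ => by positivity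
  unfold morseJ
  gcongr

/-- **Energy estimate for the discrete Morse flow.** Let `S` be finite with all degrees
on `S̄ = S ∪ δS` at least `1`, `h > 0`, and `λ₁ ≤ ⋯ ≤ λ_N`. If `u₀` vanishes on `δS`
and, for `n = 1, …, N`, `u_n` minimizes
`F_n(u) = (1/(2h)) Σ_S (u − u_{n−1})² d + J_n(u)` over functions vanishing on `δS`,
then
`(1/2) Σ_{n=1}^N h Σ_{x∈S} ((u_n x − u_{n−1} x)/h)² d_x + J_N(u_N) ≤ J₁(u₀)`. -/
theorem discrete_morse_flow_energy_estimate {V : Type*} [DecidableEq V]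
    (G : SimpleGraph V) [DecidableRel G.Adj] [∀ v : V, Fintype (G.neighborSet v)]
    (S : Finset V) (hdeg : ∀ x ∈ graphCl G S, 1 ≤ G.degree x)
    (h : ℝ) (hh : 0 < h) (N : ℕ) (hN : 1 ≤ N)
    (lam : ℕ → ℝ) (hlam : ∀ n, 1 ≤ n → n < N → lam n ≤ lam (n + 1))
    (u : ℕ → V → ℝ)
    (hu0 : ∀ y ∈ graphBd G S, u 0 y = 0)
    (hmin : ∀ n, 1 ≤ n → n ≤ N →
      (∀ y ∈ graphBd G S, u n y = 0) ∧
      ∀ w : V → ℝ, (∀ y ∈ graphBd G S, w y = 0) →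
        (1 / (2 * h)) * ∑ x ∈ S, (u n x - u (n - 1) x) ^ 2 * (G.degree x : ℝ)
            + morseJ G S lam n (u n) ≤
          (1 / (2 * h)) * ∑ x ∈ S, (w x - u (n - 1) x) ^ 2 * (G.degree x : ℝ)
            + morseJ G S lam n w) :
    (1 / 2 : ℝ) * ∑ n ∈ Finset.Icc 1 N,
        h * ∑ x ∈ S, ((u n x - u (n - 1) x) / h) ^ 2 * (G.degree x : ℝ)
      + morseJ G S lam N (u N) ≤ morseJ G S lam 1 (u 0) := by
  have hbd : ∀ m ≤ N, ∀ y ∈ graphBd G S, u m y = 0 := by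
    rintro (_ | m) hm
    · exact hu0
    · exact (hmin (m + 1) (by omega) hm).1
  have hstep : ∀ n, 1 ≤ n → n ≤ N →
      (1 / (2 * h)) * ∑ x ∈ S, (u n x - u (n - 1) x) ^ 2 * (G.degree x : ℝ)
        + morseJ G S lam n (u n) ≤ morseJ G S lam n (u (n - 1)) := by
    intro n h1 h2
    simpa using (hmin n h1 h2).2 (u (n - 1)) (hbd (n - 1) (by omega))
  rw [mul_sum]
  simp only [half_mul_mul_sum_div_sq]
  exact sum_Icc_add_energy_le (E := fun n m => morseJ G S lam n (u m)) hN hstep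
    fun n h1 h2 => morseJ_le_morseJ_of_le G S (hlam n h1 h2) _
end

section
/- Let G = (V,E) be a locally finite simple graph, S ⊆ V finite with every vertex of S̄ = S ∪ δS of degree at least 1, T > 0, and let Vpot : [0,T] × S̄ → ℝ be a potential which is continuous in t for each fixed vertex. Let φ : S̄ → ℝ vanish on δS. Then there exists a function u : [0,T] × S̄ → ℝ such that u(t,y) = 0 for all t ∈ [0,T] and y ∈ δS, u(0,x) = φ(x) for all x ∈ S̄, t ↦ u(t,x) is differentiable for each x ∈ S, and ∂_t u(t,x) = Δu(t,x) + Vpot(t,x) u(t,x) for all t ∈ [0,T] and x ∈ S (existence of a global solution of the heat flow with time-variable potential and Dirichlet boundary condition). -/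
/-!
Extending a function on `S` by zero to `δS` turns the Dirichlet problem into the linear ODE
`v' = A(t) v` on `S → ℝ`, where `A(t)` is `Δ + Vpot(t)` compressed to `S`. As `t ↦ A(t)` is
continuous, the operator norms are bounded on `[0, T]`, so the field is uniformly Lipschitz and
fixes `0`. Picard–Lindelöf then gives solutions on intervals of a fixed length depending only on
the Lipschitz constant, and finitely many of them glue to a solution on `[0, T]`.
-/

open Set
open scoped NNReal

section ODE

variable {E : Type*} [NormedAddCommGroup E] [NormedSpace ℝ E]

def IsODESolutionOn (F : ℝ → E → E) (f : ℝ → E) (s : Set ℝ) : Prop :=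
  ∀ t ∈ s, HasDerivWithinAt f (F t (f t)) s t

variable {F : ℝ → E → E} {f g : ℝ → E}

theorem IsODESolutionOn.congr {s : Set ℝ} (hf : IsODESolutionOn F f s) (hfg : EqOn g f s) :
    IsODESolutionOn F g s := fun t ht => by
  rw [hfg ht]
  exact (hf t ht).congr_of_mem hfg ht

theorem IsODESolutionOn.union {s u : Set ℝ} (hs : IsClosed s) (hu : IsClosed u)
    (hfs : IsODESolutionOn F f s) (hfu : IsODESolutionOn F f u) :
    IsODESolutionOn F f (s ∪ u) := by
  have within {v : Set ℝ} (hv : IsClosed v) (hfv : IsODESolutionOn F f v) (t : ℝ) :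
      HasDerivWithinAt f (F t (f t)) v t := by
    by_cases ht : t ∈ v
    · exact hfv t ht
    · exact HasFDerivWithinAt.of_notMem_closure (by rwa [hv.closure_eq])
  exact fun t _ => (within hs hfs t).union (within hu hfu t)

theorem IsODESolutionOn.piecewise_Icc {a b c : ℝ} (hac : a ≤ c) (hcb : c ≤ b)
    (hf : IsODESolutionOn F f (Icc a c)) (hg : IsODESolutionOn F g (Icc c b)) (hfg : f c = g c) :
    IsODESolutionOn F (fun t => if t ≤ c then f t else g t) (Icc a b) := by
  rw [← Icc_union_Icc_eq_Icc hac hcb]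
  refine (hf.congr fun t ht => if_pos ht.2).union isClosed_Icc isClosed_Icc
    (hg.congr fun t ht => ?_)
  rcases ht.1.eq_or_lt with rfl | hct
  · simp [hfg]
  · exact if_neg hct.not_ge

variable [CompleteSpace E] {K : ℝ≥0} {a b : ℝ}

/-- Since `F t 0 = 0`, `‖F t x‖ ≤ K ‖x‖ ≤ 2 K ‖x₀‖` on the ball of radius `‖x₀‖` around `x₀`,
and `K (b - a) ≤ 1 / 2` keeps the Picard iterates inside that ball. -/
theorem exists_isODESolutionOn_Icc_of_lipschitzWith_of_mul_le (hab : a ≤ b)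
    (hstep : K * (b - a) ≤ 1 / 2) (hLip : ∀ t ∈ Icc a b, LipschitzWith K (F t))
    (hF0 : ∀ t ∈ Icc a b, F t 0 = 0) (hcont : ∀ x, ContinuousOn (F · x) (Icc a b)) (x₀ : E) :
    ∃ f : ℝ → E, f a = x₀ ∧ IsODESolutionOn F f (Icc a b) := by
  have hPL : IsPicardLindelof F (tmin := a) (tmax := b) ⟨a, left_mem_Icc.2 hab⟩ x₀
      ‖x₀‖₊ 0 (2 * K * ‖x₀‖₊) K := by
    refine ⟨fun t ht => (hLip t ht).lipschitzOnWith, fun x _ => hcont x, fun t ht x hx => ?_, ?_⟩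
    · have hx : ‖x‖ ≤ 2 * ‖x₀‖ := by
        have := norm_le_norm_add_norm_sub' x x₀
        rw [Metric.mem_closedBall, dist_eq_norm] at hx
        push_cast at hx
        linarith
      calc ‖F t x‖ = ‖F t x - F t 0‖ := by rw [hF0 t ht, sub_zero]
        _ ≤ K * ‖x - 0‖ := by rw [← dist_eq_norm, ← dist_eq_norm]; exact (hLip t ht).dist_le_mul x 0
        _ ≤ K * (2 * ‖x₀‖) := by rw [sub_zero]; gcongr
        _ = ↑(2 * K * ‖x₀‖₊) := by push_cast; ring
    · have hba : max (b - a) (a - a) = b - a := by simp [hab]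
      simp only [hba, NNReal.coe_mul, NNReal.coe_ofNat, coe_nnnorm, NNReal.coe_zero, sub_zero]
      nlinarith [norm_nonneg x₀]
  exact hPL.exists_eq_forall_mem_Icc_hasDerivWithinAt₀

theorem exists_isODESolutionOn_Icc_of_lipschitzWith (hab : a ≤ b)
    (hLip : ∀ t ∈ Icc a b, LipschitzWith K (F t)) (hF0 : ∀ t ∈ Icc a b, F t 0 = 0)
    (hcont : ∀ x, ContinuousOn (F · x) (Icc a b)) (x₀ : E) :
    ∃ f : ℝ → E, f a = x₀ ∧ IsODESolutionOn F f (Icc a b) := by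
  set δ : ℝ := 1 / (2 * K + 1)
  have hδ : 0 < δ := by positivity
  have hKδ : K * δ ≤ 1 / 2 := by
    rw [mul_one_div, div_le_div_iff₀ (by positivity) two_pos]; linarith
  have short {c d : ℝ} (hac : a ≤ c) (hcd : c ≤ d) (hdb : d ≤ b) (hdc : d - c ≤ δ) (y : E) :
      ∃ g : ℝ → E, g c = y ∧ IsODESolutionOn F g (Icc c d) := by
    have hsub : Icc c d ⊆ Icc a b := Icc_subset_Icc hac hdb
    exact exists_isODESolutionOn_Icc_of_lipschitzWith_of_mul_le hcd
      (hKδ.trans' (by gcongr)) (fun t ht => hLip t (hsub ht)) (fun t ht => hF0 t (hsub ht))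
      (fun x => (hcont x).mono hsub) y
  set c : ℕ → ℝ := fun n => min b (a + n * δ)
  have hc_le (n : ℕ) : c n ≤ b := min_le_left _ _
  have hac (n : ℕ) : a ≤ c n := le_min hab (le_add_of_nonneg_right (by positivity))
  have hc_succ (n : ℕ) : c n ≤ c (n + 1) := by simp only [c]; gcongr; linarith
  have hc_step (n : ℕ) : c (n + 1) - c n ≤ δ := by
    have : c (n + 1) ≤ min (b + δ) (a + n * δ + δ) :=
      min_le_min (by linarith) (by push_cast; linarith)
    rw [min_add_add_right] at this
    linarith
  have upto (n : ℕ) : ∃ f : ℝ → E, f a = x₀ ∧ IsODESolutionOn F f (Icc a (c n)) := by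
    induction n with
    | zero => exact short le_rfl (hac 0) (hc_le 0) (by simp [c, hab, hδ.le]) x₀
    | succ n ih =>
      obtain ⟨f, hfa, hf⟩ := ih
      obtain ⟨g, hgc, hg⟩ := short (hac n) (hc_succ n) (hc_le _) (hc_step n) (f (c n))
      exact ⟨_, by simp [hac n, hfa], hf.piecewise_Icc (hac n) (hc_succ n) hg hgc.symm⟩
  have hcN : c ⌈(b - a) / δ⌉₊ = b := by
    refine min_eq_left ?_
    have := Nat.le_ceil ((b - a) / δ)
    rw [div_le_iff₀ hδ] at this
    linarith
  simpa [hcN] using upto ⌈(b - a) / δ⌉₊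

theorem exists_isODESolutionOn_Icc_of_continuousOn_clm {A : ℝ → E →L[ℝ] E}
    (hA : ContinuousOn A (Icc a b)) (hab : a ≤ b) (x₀ : E) :
    ∃ f : ℝ → E, f a = x₀ ∧ IsODESolutionOn (fun t => A t) f (Icc a b) := by
  obtain ⟨K, hK⟩ := isCompact_Icc.exists_bound_of_continuousOn hA
  refine exists_isODESolutionOn_Icc_of_lipschitzWith (K := K.toNNReal) hab
    (fun t ht => (A t).lipschitz.weaken ?_) (fun t _ => map_zero _)
    (fun x => hA.clm_apply continuousOn_const) x₀
  rw [← NNReal.coe_le_coe, coe_nnnorm, Real.coe_toNNReal']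
  exact (hK t ht).trans (le_max_left _ _)

end ODE

section Heat

variable {V : Type*} (G : SimpleGraph V) [DecidableRel G.Adj] [∀ v : V, Fintype (G.neighborSet v)]

noncomputable def graphSchrodinger (P : V → ℝ) : (V → ℝ) →ₗ[ℝ] V → ℝ where
  toFun f x := graphLap G f x + P x * f x
  map_add' f g := by
    ext x
    simp only [graphLap, Pi.add_apply, add_sub_add_comm, Finset.sum_add_distrib]
    ring
  map_smul' c f := by
    ext x
    simp only [graphLap, Pi.smul_apply, smul_eq_mul, RingHom.id_apply, ← mul_sub,
      ← Finset.mul_sum]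
    ring

variable {G}

noncomputable def dirichletCompression (S : Finset V) (A : (V → ℝ) →ₗ[ℝ] V → ℝ) :
    (S → ℝ) →L[ℝ] S → ℝ :=
  LinearMap.toContinuousLinearMap
    (LinearMap.funLeft ℝ ℝ Subtype.val ∘ₗ A ∘ₗ Function.ExtendByZero.linearMap ℝ Subtype.val)

theorem dirichletCompression_apply (S : Finset V) (A : (V → ℝ) →ₗ[ℝ] V → ℝ) (v : S → ℝ) (i : S) :
    dirichletCompression S A v i = A (Function.extend Subtype.val v 0) i :=
  rfl

theorem continuousOn_dirichletCompression_graphSchrodinger {S : Finset V} {Vpot : ℝ → V → ℝ}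
    {s : Set ℝ} (hV : ∀ x ∈ S, ContinuousOn (Vpot · x) s) :
    ContinuousOn (fun t => dirichletCompression S (graphSchrodinger G (Vpot t))) s := by
  refine continuousOn_clm_apply.2 fun v => continuousOn_pi.2 fun i => ?_
  simp only [dirichletCompression_apply]
  exact continuousOn_const.add ((hV i i.2).mul continuousOn_const)

end Heat

/-- **Global existence for the heat flow with a time-variable potential and Dirichlet
boundary condition.** Let `S ⊆ V` be finite with all degrees on `S̄ = S ∪ δS` at least
`1`, `T > 0`, `Vpot : [0,T] × S̄ → ℝ` continuous in `t` for each fixed vertex, and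
`φ : S̄ → ℝ` vanishing on `δS`. Then there exists `u : [0,T] × S̄ → ℝ` with `u = 0` on
`δS`, `u(0,·) = φ`, `t ↦ u(t,x)` differentiable for each `x ∈ S`, and
`∂_t u(t,x) = Δu(t,x) + Vpot(t,x) u(t,x)` on `[0,T] × S`. -/
theorem heat_flow_time_variable_potential_exists {V : Type*} [DecidableEq V]
    (G : SimpleGraph V) [DecidableRel G.Adj] [∀ v : V, Fintype (G.neighborSet v)]
    (S : Finset V) (hdeg : ∀ x ∈ graphCl G S, 1 ≤ G.degree x)
    (T : ℝ) (hT : 0 < T) (Vpot : ℝ → V → ℝ)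
    (hVcont : ∀ x ∈ graphCl G S, ContinuousOn (fun t => Vpot t x) (Set.Icc 0 T))
    (φ : V → ℝ) (hφ : ∀ y ∈ graphBd G S, φ y = 0) :
    ∃ u : ℝ → V → ℝ,
      (∀ t ∈ Set.Icc (0 : ℝ) T, ∀ y ∈ graphBd G S, u t y = 0) ∧
      (∀ x ∈ graphCl G S, u 0 x = φ x) ∧
      (∀ x ∈ S, ∀ t ∈ Set.Icc (0 : ℝ) T,
        HasDerivWithinAt (fun s => u s x) (graphLap G (u t) x + Vpot t x * u t x)
          (Set.Icc 0 T) t) := by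
  have hA := continuousOn_dirichletCompression_graphSchrodinger (G := G)
    fun x hx => hVcont x (Finset.mem_union_left _ hx)
  obtain ⟨f, hf0, hf⟩ := exists_isODESolutionOn_Icc_of_continuousOn_clm hA hT.le fun i => φ i
  have extend_of_mem {x : V} (hx : x ∈ S) (t : ℝ) :
      Function.extend Subtype.val (f t) 0 x = f t ⟨x, hx⟩ :=
    Subtype.val_injective.extend_apply (f t) 0 ⟨x, hx⟩
  have extend_of_notMem {x : V} (hx : x ∉ S) (t : ℝ) :
      Function.extend Subtype.val (f t) 0 x = 0 := by
    simp [hx]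
  refine ⟨fun t => Function.extend Subtype.val (f t) 0, fun t _ y hy => ?_, fun x hx => ?_,
    fun x hx t ht => ?_⟩
  · exact extend_of_notMem (Finset.mem_sdiff.1 hy).2 t
  · by_cases hxS : x ∈ S
    · exact (extend_of_mem hxS 0).trans (congrFun hf0 _)
    · have hxδ : x ∈ graphBd G S := (Finset.mem_union.1 hx).resolve_left hxS
      exact (extend_of_notMem hxS 0).trans (hφ x hxδ).symm
  · exact (hasDerivWithinAt_pi.1 (hf t ht) ⟨x, hx⟩).congr_of_mem (fun s _ => extend_of_mem hx s) ht
end
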